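/- Let A, B, C be unital ℂ-algebras with B commutative, let Δ : A → A ⊗ A and Φ : A → B ⊗ C be unital algebra homomorphisms, let m : B ⊗ B → B be the multiplication homomorphism, F : C ⊗ B → B ⊗ C the flip, and set W = (id_B ⊗ F ⊗ id_{C⊗C}) ∘ (id_{B⊗C} ⊗ F ⊗ id_C). Suppose Γ : C → C ⊗ C is a unital algebra homomorphism satisfying (id_B ⊗ Γ) ∘ Φ = (m ⊗ id_{C⊗C}) ∘ (id_B ⊗ F ⊗ id_C) ∘ (Φ ⊗ Φ) ∘ Δ. Then (id_B ⊗ Γ ⊗ id_C) ∘ (id_B ⊗ Γ) ∘ Φ = (m ⊗ id_{C⊗C⊗C}) ∘ W ∘ (m ⊗ id_{C⊗C⊗B⊗C}) ∘ (id_B ⊗ F ⊗ id_{C⊗B⊗C}) ∘ (Φ ⊗ Φ ⊗ Φ) ∘ (Δ ⊗ id_A) ∘ Δ. -/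

import Mathlib

open TensorProduct

set_option maxSynthPendingDepth 5
set_option maxHeartbeats 1000000

section
variable (B C : Type) [CommRing B] [Ring C] [Algebra ℂ B] [Algebra ℂ C]

/-- The flip `F : C ⊗ B → B ⊗ C` as an algebra homomorphism. -/
noncomputable def flipCB : C ⊗[ℂ] B →ₐ[ℂ] B ⊗[ℂ] C :=
  (Algebra.TensorProduct.comm ℂ C B).toAlgHom

/-- `W = (id_B ⊗ F ⊗ id_{C⊗C}) ∘ (id_{B⊗C} ⊗ F ⊗ id_C) : B⊗C⊗C⊗B⊗C → B⊗B⊗C⊗C⊗C`, with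
the canonical associativity identifications (implicit in the classical notation)
inserted explicitly. -/
noncomputable def WhomAlg :
    (B ⊗[ℂ] (C ⊗[ℂ] (C ⊗[ℂ] (B ⊗[ℂ] C))))
      →ₐ[ℂ] (B ⊗[ℂ] ((B ⊗[ℂ] C) ⊗[ℂ] (C ⊗[ℂ] C))) :=
  -- id_B ⊗ F ⊗ id_{C⊗C}
  (Algebra.TensorProduct.map (AlgHom.id ℂ B)
    (Algebra.TensorProduct.map (flipCB B C) (AlgHom.id ℂ (C ⊗[ℂ] C)))).comp <|
  -- reassociation
  ((Algebra.TensorProduct.congr (AlgEquiv.refl (A₁ := B))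
    ((Algebra.TensorProduct.congr (AlgEquiv.refl (A₁ := C))
        (Algebra.TensorProduct.assoc ℂ ℂ ℂ B C C)).trans
      (Algebra.TensorProduct.assoc ℂ ℂ ℂ C B (C ⊗[ℂ] C)).symm)).toAlgHom).comp <|
  -- id_{B⊗C} ⊗ F ⊗ id_C
  (Algebra.TensorProduct.map (AlgHom.id ℂ B) (Algebra.TensorProduct.map (AlgHom.id ℂ C)
    (Algebra.TensorProduct.map (flipCB B C) (AlgHom.id ℂ C)))).comp
  -- reassociation
  (Algebra.TensorProduct.congr (AlgEquiv.refl (A₁ := B))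
    (Algebra.TensorProduct.congr (AlgEquiv.refl (A₁ := C))
      (Algebra.TensorProduct.assoc ℂ ℂ ℂ C B C).symm)).toAlgHom

/-- `(m ⊗ id_{C⊗C⊗C}) ∘ W ∘ (m ⊗ id_{C⊗C⊗B⊗C}) ∘ (id_B ⊗ F ⊗ id_{C⊗B⊗C}) :
B⊗C⊗B⊗C⊗B⊗C → B⊗C⊗C⊗C`, with the canonical associativity identifications inserted. -/
noncomputable def sixFoldRHSAlg :
    (B ⊗[ℂ] (C ⊗[ℂ] (B ⊗[ℂ] (C ⊗[ℂ] (B ⊗[ℂ] C))))) →ₐ[ℂ] (B ⊗[ℂ] (C ⊗[ℂ] (C ⊗[ℂ] C))) :=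
  -- m ⊗ id_{C⊗C⊗C}
  (Algebra.TensorProduct.map (Algebra.TensorProduct.lmul' ℂ (S := B))
    (AlgHom.id ℂ (C ⊗[ℂ] (C ⊗[ℂ] C)))).comp <|
  -- reassociation
  (((Algebra.TensorProduct.congr (AlgEquiv.refl (A₁ := B))
        (Algebra.TensorProduct.assoc ℂ ℂ ℂ B C (C ⊗[ℂ] C))).trans
    (Algebra.TensorProduct.assoc ℂ ℂ ℂ B B (C ⊗[ℂ] (C ⊗[ℂ] C))).symm).toAlgHom).comp <|
  -- W
  (WhomAlg B C).comp <|
  -- m ⊗ id_{C⊗C⊗B⊗C}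
  (Algebra.TensorProduct.map (Algebra.TensorProduct.lmul' ℂ (S := B))
    (AlgHom.id ℂ (C ⊗[ℂ] (C ⊗[ℂ] (B ⊗[ℂ] C))))).comp <|
  -- reassociation
  (((Algebra.TensorProduct.congr (AlgEquiv.refl (A₁ := B))
        (Algebra.TensorProduct.assoc ℂ ℂ ℂ B C (C ⊗[ℂ] (B ⊗[ℂ] C)))).trans
    (Algebra.TensorProduct.assoc ℂ ℂ ℂ B B (C ⊗[ℂ] (C ⊗[ℂ] (B ⊗[ℂ] C)))).symm).toAlgHom).comp <|
  -- id_B ⊗ F ⊗ id_{C⊗B⊗C}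
  (Algebra.TensorProduct.map (AlgHom.id ℂ B)
    (Algebra.TensorProduct.map (flipCB B C) (AlgHom.id ℂ (C ⊗[ℂ] (B ⊗[ℂ] C))))).comp
  -- reassociation
  (Algebra.TensorProduct.congr (AlgEquiv.refl (A₁ := B))
    (Algebra.TensorProduct.assoc ℂ ℂ ℂ C B (C ⊗[ℂ] (B ⊗[ℂ] C))).symm).toAlgHom

variable (A : Type) [Ring A] [Algebra ℂ A]

/-- The composite `(m ⊗ id_{C⊗C}) ∘ (id_B ⊗ F ⊗ id_C) ∘ (Φ ⊗ Φ) ∘ Δ : A → B ⊗ (C ⊗ C)`,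
the right-hand side of the defining property of `Γ`. -/
noncomputable def comulRHS (Δ : A →ₐ[ℂ] A ⊗[ℂ] A) (Φ : A →ₐ[ℂ] B ⊗[ℂ] C) :
    A →ₐ[ℂ] B ⊗[ℂ] (C ⊗[ℂ] C) :=
  (Algebra.TensorProduct.map (Algebra.TensorProduct.lmul' ℂ (S := B))
      (AlgHom.id ℂ (C ⊗[ℂ] C))).comp <|
  (((Algebra.TensorProduct.congr (AlgEquiv.refl (A₁ := B))
        (Algebra.TensorProduct.assoc ℂ ℂ ℂ B C C)).trans
      (Algebra.TensorProduct.assoc ℂ ℂ ℂ B B (C ⊗[ℂ] C)).symm).toAlgHom).comp <|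
  (Algebra.TensorProduct.map (AlgHom.id ℂ B)
      (Algebra.TensorProduct.map (flipCB B C) (AlgHom.id ℂ C))).comp <|
  ((((Algebra.TensorProduct.assoc ℂ ℂ ℂ B C (B ⊗[ℂ] C)).trans
      (Algebra.TensorProduct.congr (AlgEquiv.refl (A₁ := B))
        (Algebra.TensorProduct.assoc ℂ ℂ ℂ C B C).symm)).toAlgHom).comp
    ((Algebra.TensorProduct.map Φ Φ).comp Δ))

/-- The canonical associativity identification
`((B⊗C) ⊗ (B⊗C)) ⊗ (B⊗C) ≃ B ⊗ (C ⊗ (B ⊗ (C ⊗ (B ⊗ C))))`. -/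
noncomputable def reassocSix' :
    (((B ⊗[ℂ] C) ⊗[ℂ] (B ⊗[ℂ] C)) ⊗[ℂ] (B ⊗[ℂ] C)) ≃ₐ[ℂ]
      (B ⊗[ℂ] (C ⊗[ℂ] (B ⊗[ℂ] (C ⊗[ℂ] (B ⊗[ℂ] C))))) :=
  ((Algebra.TensorProduct.assoc ℂ ℂ ℂ (B ⊗[ℂ] C) (B ⊗[ℂ] C) (B ⊗[ℂ] C)).trans
    (Algebra.TensorProduct.assoc ℂ ℂ ℂ B C ((B ⊗[ℂ] C) ⊗[ℂ] (B ⊗[ℂ] C)))).trans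
    (Algebra.TensorProduct.congr (AlgEquiv.refl (A₁ := B))
      (Algebra.TensorProduct.congr (AlgEquiv.refl (A₁ := C))
        (Algebra.TensorProduct.assoc ℂ ℂ ℂ B C (B ⊗[ℂ] C))))

end

/-! The map `μ : (B ⊗ C) ⊗ (B ⊗ D) → B ⊗ (C ⊗ D)`, `(b ⊗ c) ⊗ (b' ⊗ d) ↦ bb' ⊗ (c ⊗ d)`, is natural
in `C` and `D`, and the hypothesis reads `(id_B ⊗ Γ) ∘ Φ = μ ∘ (Φ ⊗ Φ) ∘ Δ`. Applying `Γ ⊗ id_C` to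
it, pushing `Γ` through `μ` by naturality and then using the hypothesis once more in the first
tensor factor turns the left-hand side into `μ ∘ (μ ⊗ id) ∘ (Φ ⊗ Φ ⊗ Φ) ∘ (Δ ⊗ id_A) ∘ Δ` (up to
reassociation). The structural map on the right-hand side is the same `μ ∘ (μ ⊗ id)`, as one
checks on pure tensors. -/

namespace Algebra.TensorProduct

variable (R B : Type*) {C D C' D' : Type*} [CommSemiring R] [CommSemiring B] [Semiring C]
  [Semiring D] [Semiring C'] [Semiring D'] [Algebra R B] [Algebra R C] [Algebra R D]
  [Algebra R C'] [Algebra R D']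

variable (C D) in
noncomputable def mulTensor : (B ⊗[R] C) ⊗[R] (B ⊗[R] D) →ₐ[R] B ⊗[R] (C ⊗[R] D) :=
  (map (lmul' R) (AlgHom.id R (C ⊗[R] D))).comp (tensorTensorTensorComm R R R R B C B D).toAlgHom

@[simp]
theorem mulTensor_tmul (b b' : B) (c : C) (d : D) :
    mulTensor R B C D ((b ⊗ₜ c) ⊗ₜ (b' ⊗ₜ d)) = (b * b') ⊗ₜ (c ⊗ₜ d) := by
  simp [mulTensor]

theorem map_id_map_comp_mulTensor (f : C →ₐ[R] C') (g : D →ₐ[R] D') :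
    (map (AlgHom.id R B) (map f g)).comp (mulTensor R B C D) =
      (mulTensor R B C' D').comp (map (map (AlgHom.id R B) f) (map (AlgHom.id R B) g)) := by
  ext <;> simp [one_def]

end Algebra.TensorProduct

section

open Algebra.TensorProduct (mulTensor)

variable (B C : Type) [CommRing B] [Ring C] [Algebra ℂ B] [Algebra ℂ C]

theorem comulRHS_eq_mulTensor_comp (A : Type) [Ring A] [Algebra ℂ A]
    (Δ : A →ₐ[ℂ] A ⊗[ℂ] A) (Φ : A →ₐ[ℂ] B ⊗[ℂ] C) :
    comulRHS B C A Δ Φ = (mulTensor ℂ B C C).comp ((Algebra.TensorProduct.map Φ Φ).comp Δ) := by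
  simp only [comulRHS, ← AlgHom.comp_assoc]
  congr 2
  ext <;> simp [flipCB, Algebra.TensorProduct.one_def]

theorem sixFoldRHSAlg_comp_reassocSix' :
    (sixFoldRHSAlg B C).comp (reassocSix' B C).toAlgHom =
      (Algebra.TensorProduct.congr AlgEquiv.refl
          (Algebra.TensorProduct.assoc ℂ ℂ ℂ C C C)).toAlgHom.comp
        ((mulTensor ℂ B (C ⊗[ℂ] C) C).comp
          (Algebra.TensorProduct.map (mulTensor ℂ B C C) (AlgHom.id ℂ (B ⊗[ℂ] C)))) := by
  ext <;> simp [sixFoldRHSAlg, WhomAlg, reassocSix', flipCB, Algebra.TensorProduct.one_def]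

end

/-- if `(id_B ⊗ Γ) ∘ Φ = (m ⊗ id_{C⊗C}) ∘ (id_B ⊗ F ⊗ id_C) ∘ (Φ ⊗ Φ) ∘ Δ`,
then `(id_B ⊗ Γ ⊗ id_C) ∘ (id_B ⊗ Γ) ∘ Φ = (m ⊗ id_{C⊗C⊗C}) ∘ W ∘ (m ⊗ id_{C⊗C⊗B⊗C}) ∘
(id_B ⊗ F ⊗ id_{C⊗B⊗C}) ∘ (Φ ⊗ Φ ⊗ Φ) ∘ (Δ ⊗ id_A) ∘ Δ`. -/
theorem comul_right_coassoc_expansion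
    (A B C : Type) [Ring A] [CommRing B] [Ring C]
    [Algebra ℂ A] [Algebra ℂ B] [Algebra ℂ C]
    (Δ : A →ₐ[ℂ] A ⊗[ℂ] A) (Φ : A →ₐ[ℂ] B ⊗[ℂ] C) (Γ : C →ₐ[ℂ] C ⊗[ℂ] C)
    (hΓ : (Algebra.TensorProduct.map (AlgHom.id ℂ B) Γ).comp Φ = comulRHS B C A Δ Φ) :
    ((Algebra.TensorProduct.congr (AlgEquiv.refl (A₁ := B))
        (Algebra.TensorProduct.assoc ℂ ℂ ℂ C C C)).toAlgHom).comp
      ((Algebra.TensorProduct.map (AlgHom.id ℂ B)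
          (Algebra.TensorProduct.map Γ (AlgHom.id ℂ C))).comp
        ((Algebra.TensorProduct.map (AlgHom.id ℂ B) Γ).comp Φ)) =
    (sixFoldRHSAlg B C).comp ((reassocSix' B C).toAlgHom.comp
      ((Algebra.TensorProduct.map (Algebra.TensorProduct.map Φ Φ) Φ).comp
        ((Algebra.TensorProduct.map Δ (AlgHom.id ℂ A)).comp Δ))) := by
  open Algebra.TensorProduct (mulTensor map) in
  have hnat : (map (AlgHom.id ℂ B) (map Γ (AlgHom.id ℂ C))).comp (mulTensor ℂ B C C) =
      (mulTensor ℂ B (C ⊗[ℂ] C) C).comp (map (map (AlgHom.id ℂ B) Γ) (AlgHom.id ℂ (B ⊗[ℂ] C))) := by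
    simpa only [Algebra.TensorProduct.map_id] using
      Algebra.TensorProduct.map_id_map_comp_mulTensor ℂ B Γ (AlgHom.id ℂ C)
  have hΓ_left : (map (map (AlgHom.id ℂ B) Γ) (AlgHom.id ℂ (B ⊗[ℂ] C))).comp (map Φ Φ) =
      (map (mulTensor ℂ B C C) (AlgHom.id ℂ (B ⊗[ℂ] C))).comp
        ((map (map Φ Φ) Φ).comp (map Δ (AlgHom.id ℂ A))) := by
    rw [← Algebra.TensorProduct.map_comp, ← Algebra.TensorProduct.map_comp,
      ← Algebra.TensorProduct.map_comp, hΓ, comulRHS_eq_mulTensor_comp]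
    simp only [AlgHom.id_comp, AlgHom.comp_id]
  rw [hΓ, comulRHS_eq_mulTensor_comp, ← AlgHom.comp_assoc (sixFoldRHSAlg B C),
    sixFoldRHSAlg_comp_reassocSix', ← AlgHom.comp_assoc _ (mulTensor ℂ B C C), hnat,
    AlgHom.comp_assoc, ← AlgHom.comp_assoc _ (map Φ Φ), hΓ_left]
  simp only [AlgHom.comp_assoc]
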